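/- arXiv:1812.00272 — 5 statements merged into one kernel-verified Lean document; each statement's English description precedes it below -/
import Mathlib

section
/- Let X and Y be real Hilbert spaces, u† ∈ X, y = F(u†), and y^δ ∈ Y with ‖y^δ − y‖ ≤ δ. Let u ∈ B_ρ(u†), suppose F is Fréchet differentiable at u with derivative F'(u) ∈ B(X,Y), ‖F'(u)‖ ≤ L_F, and suppose the tangential cone condition ‖F(u) − F(u†) − F'(u)(u − u†)‖ ≤ ν‖F(u) − F(u†)‖ holds with ν > 0. Assume ‖F(u) − y^δ‖ ≥ τδ for some τ > 0, and set C_τ = 1 − L_F² − ν − (1+ν)/τ. Then −‖F(u) − y^δ‖² + ⟨F(u) − y^δ, F(u) − y − F'(u)(u − u†)⟩ + δ‖F(u) − y^δ‖ + ‖F'(u)*(F(u) − y^δ)‖² ≤ −C_τ‖F(u) − y^δ‖², where F'(u)* denotes the Hilbert-space adjoint of F'(u). -/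
open scoped RealInnerProductSpace

/-!
With `r = F(u) − yδ`, Cauchy–Schwarz and the tangential cone condition bound the inner product
by `ν‖r‖‖F(u) − F(u†)‖ ≤ ν‖r‖(‖r‖ + δ)`, the adjoint term is at most `L_F²‖r‖²` because taking
adjoints preserves the operator norm, and the discrepancy condition `τδ ≤ ‖r‖` turns every
`δ‖r‖` into `‖r‖²/τ`. Summing these bounds gives exactly `−C_τ‖r‖²`.
-/

section

variable {X Y : Type*} [NormedAddCommGroup X] [InnerProductSpace ℝ X] [CompleteSpace X]
  [NormedAddCommGroup Y] [InnerProductSpace ℝ Y] [CompleteSpace Y]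

theorem ContinuousLinearMap.sq_norm_adjoint_apply_le {A : X →L[ℝ] Y} {L : ℝ} (hA : ‖A‖ ≤ L)
    (r : Y) : ‖ContinuousLinearMap.adjoint A r‖ ^ 2 ≤ L ^ 2 * ‖r‖ ^ 2 := by
  have h : ‖ContinuousLinearMap.adjoint A r‖ ≤ L * ‖r‖ :=
    calc ‖ContinuousLinearMap.adjoint A r‖ ≤ ‖ContinuousLinearMap.adjoint A‖ * ‖r‖ :=
          (ContinuousLinearMap.adjoint A).le_opNorm r
      _ = ‖A‖ * ‖r‖ := by rw [LinearIsometryEquiv.norm_map]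
      _ ≤ L * ‖r‖ := by gcongr
  rw [← mul_pow]
  exact pow_le_pow_left₀ (norm_nonneg _) h 2

end

theorem inner_le_of_norm_le_mul_norm_sub {Y : Type*} [NormedAddCommGroup Y]
    [InnerProductSpace ℝ Y] {a e y yδ : Y} {δ ν : ℝ} (hν : 0 ≤ ν) (hnoise : ‖yδ - y‖ ≤ δ)
    (he : ‖e‖ ≤ ν * ‖a - y‖) :
    ⟪a - yδ, e⟫ ≤ ν * ‖a - yδ‖ * (‖a - yδ‖ + δ) := by
  have hsub : ‖a - y‖ ≤ ‖a - yδ‖ + δ :=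
    (norm_sub_le_norm_sub_add_norm_sub a yδ y).trans (by gcongr)
  calc ⟪a - yδ, e⟫ ≤ ‖a - yδ‖ * ‖e‖ := real_inner_le_norm _ _
    _ ≤ ‖a - yδ‖ * (ν * (‖a - yδ‖ + δ)) := by gcongr; exact he.trans (by gcongr)
    _ = ν * ‖a - yδ‖ * (‖a - yδ‖ + δ) := by ring

theorem mul_le_sq_div_of_mul_le {δ R τ : ℝ} (hτ : 0 < τ) (hR : 0 ≤ R) (h : τ * δ ≤ R) :
    δ * R ≤ R ^ 2 / τ := by
  rw [le_div_iff₀ hτ]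
  nlinarith

theorem stmt1_general
    {X Y : Type*}
    [NormedAddCommGroup X] [InnerProductSpace ℝ X] [CompleteSpace X]
    [NormedAddCommGroup Y] [InnerProductSpace ℝ Y] [CompleteSpace Y]
    (F : X → Y) (udag : X) (y yδ : Y) (δ LF ν τ Cτ : ℝ)
    (hy : y = F udag) (hν : 0 < ν) (hτ : 0 < τ)
    (hnoise : ‖yδ - y‖ ≤ δ)
    (u : X)
    (F' : X →L[ℝ] Y)
    (hLF : ‖F'‖ ≤ LF)
    (htcc : ‖F u - F udag - F' (u - udag)‖ ≤ ν * ‖F u - F udag‖)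
    (hdisc : τ * δ ≤ ‖F u - yδ‖)
    (hCτ : Cτ = 1 - LF ^ 2 - ν - (1 + ν) / τ) :
    -‖F u - yδ‖ ^ 2 + ⟪F u - yδ, F u - y - F' (u - udag)⟫
        + δ * ‖F u - yδ‖ + ‖ContinuousLinearMap.adjoint F' (F u - yδ)‖ ^ 2
      ≤ -Cτ * ‖F u - yδ‖ ^ 2 := by
  subst hy hCτ
  have hinner := inner_le_of_norm_le_mul_norm_sub hν.le hnoise htcc
  have hadj := ContinuousLinearMap.sq_norm_adjoint_apply_le hLF (F u - yδ)
  have hdelta := mul_le_sq_div_of_mul_le hτ (norm_nonneg _) hdisc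
  have hνdelta := mul_le_mul_of_nonneg_left hdelta (by linarith : 0 ≤ 1 + ν)
  have hsplit : (1 + ν) / τ * ‖F u - yδ‖ ^ 2 = (1 + ν) * (‖F u - yδ‖ ^ 2 / τ) := by ring
  linarith

/-- Estimate of the term `T_F` in the monotonicity proof: under the tangential cone condition,
the bound `‖F'(u)‖ ≤ L_F`, the noise bound `‖yδ − y‖ ≤ δ` (with `y = F(u†)`) and the
discrepancy condition `‖F(u) − yδ‖ ≥ τδ`, one has
`−‖F(u) − yδ‖² + ⟨F(u) − yδ, F(u) − y − F'(u)(u − u†)⟩ + δ‖F(u) − yδ‖ + ‖F'(u)*(F(u) − yδ)‖²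
  ≤ −C_τ‖F(u) − yδ‖²` where `C_τ = 1 − L_F² − ν − (1+ν)/τ`. -/
theorem stmt1
    {X Y : Type*}
    [NormedAddCommGroup X] [InnerProductSpace ℝ X] [CompleteSpace X]
    [NormedAddCommGroup Y] [InnerProductSpace ℝ Y] [CompleteSpace Y]
    (F : X → Y) (udag : X) (y yδ : Y) (δ ρ LF ν τ Cτ : ℝ)
    (hy : y = F udag) (hρ : 0 < ρ) (hν : 0 < ν) (hτ : 0 < τ)
    (hnoise : ‖yδ - y‖ ≤ δ)
    (u : X) (hu : u ∈ Metric.closedBall udag ρ)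
    (F' : X →L[ℝ] Y) (hdiff : HasFDerivAt F F' u)
    (hLF : ‖F'‖ ≤ LF)
    (htcc : ‖F u - F udag - F' (u - udag)‖ ≤ ν * ‖F u - F udag‖)
    (hdisc : τ * δ ≤ ‖F u - yδ‖)
    (hCτ : Cτ = 1 - LF ^ 2 - ν - (1 + ν) / τ) :
    -‖F u - yδ‖ ^ 2 + ⟪F u - yδ, F u - y - F' (u - udag)⟫
        + δ * ‖F u - yδ‖ + ‖ContinuousLinearMap.adjoint F' (F u - yδ)‖ ^ 2
      ≤ -Cτ * ‖F u - yδ‖ ^ 2 :=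
  stmt1_general F udag y yδ δ LF ν τ Cτ hy hν hτ hnoise u F' hLF htcc hdisc hCτ
end

section
/- Let X and Y be real Hilbert spaces, u† ∈ X, y = F(u†), y^δ ∈ Y with ‖y^δ − y‖ ≤ δ. Suppose u_k ∈ B_ρ(u†), F and Â are Fréchet differentiable at u_k with ‖F'(u_k)‖ ≤ L_F, ‖Â'(u_k)‖ ≤ L_Â, the tangential cone condition ‖F(u_k) − F(u†) − F'(u_k)(u_k − u†)‖ ≤ ν‖F(u_k) − F(u†)‖ holds, ‖Â(u_k) − y^δ‖ ≤ C_Â^δ, ‖F(u_k) − y^δ‖ ≥ τδ with C_τ = 1 − L_F² − ν − (1+ν)/τ ≥ 0, and λ_k ≥ 0 satisfies λ_k·L_Â·C_Â^δ ≤ ρ and λ_k ≤ C_λ^δ·‖F(u_k) − y^δ‖². Define u_{k+1} = u_k − F'(u_k)*(F(u_k) − y^δ) − λ_k·Â'(u_k)*(Â(u_k) − y^δ). Then ‖u_{k+1} − u†‖² − ‖u_k − u†‖² ≤ −2(C_τ − 2·L_Â·C_Â^δ·C_λ^δ·ρ)·‖F(u_k) − y^δ‖². -/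
/-!
Write `s = F(u_k) − y^δ` and `e = u_k − u†`. The tangential cone condition and the discrepancy
principle bound `⟪s, F'(u_k) e⟫` from below by `(1 − ν − (1 + ν)/τ)‖s‖²`, which turns the plain
Landweber step `w = e − F'(u_k)* s` into the classical monotonicity estimate
`‖w‖² ≤ ‖e‖² − 2 C_τ ‖s‖²`; in particular `‖w‖ ≤ ρ`. The regularizing term `v = λ_k Â'(u_k)*(Â(u_k) − y^δ)`
has norm at most `λ_k L_Â C_Â^δ ≤ ρ`, so `‖w − v‖² ≤ ‖w‖² + 3ρ‖v‖`, and the choice of `λ_k`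
makes `ρ‖v‖` at most `L_Â C_Â^δ C_λ^δ ρ ‖s‖²`.
-/

open scoped RealInnerProductSpace

theorem sq_norm_sub_le_of_norm_le {E : Type*} [SeminormedAddCommGroup E] {w v : E} {ρ : ℝ}
    (hw : ‖w‖ ≤ ρ) (hv : ‖v‖ ≤ ρ) : ‖w - v‖ ^ 2 ≤ ‖w‖ ^ 2 + 3 * ρ * ‖v‖ := by
  have hwv : ‖w - v‖ ≤ ‖w‖ + ‖v‖ := norm_sub_le w v
  nlinarith [norm_nonneg w, norm_nonneg v, norm_nonneg (w - v)]

section InnerProductSpace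

variable {X Y : Type*} [NormedAddCommGroup X] [InnerProductSpace ℝ X]
  [NormedAddCommGroup Y] [InnerProductSpace ℝ Y]

theorem real_inner_add_sub_ge (s n r : Y) {δ ν : ℝ} (hn : ‖n‖ ≤ δ)
    (hr : ‖r‖ ≤ ν * (‖s‖ + δ)) :
    (1 - ν) * ‖s‖ ^ 2 - (1 + ν) * δ * ‖s‖ ≤ ⟪s, s + n - r⟫ := by
  rw [inner_sub_right, inner_add_right, real_inner_self_eq_norm_sq]
  have hsn : -(‖s‖ * δ) ≤ ⟪s, n⟫ :=
    (neg_le_neg (mul_le_mul_of_nonneg_left hn (norm_nonneg s))).trans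
      ((abs_le.mp (abs_real_inner_le_norm s n)).1)
  have hsr : ⟪s, r⟫ ≤ ‖s‖ * (ν * (‖s‖ + δ)) :=
    (real_inner_le_norm s r).trans (mul_le_mul_of_nonneg_left hr (norm_nonneg s))
  linarith

theorem real_inner_residual_linearization_ge (F : X → Y) (F' : X →L[ℝ] Y) (u udag : X) (yδ : Y)
    {δ ν τ : ℝ} (hν : 0 ≤ ν) (hτ : 0 < τ) (hnoise : ‖yδ - F udag‖ ≤ δ)
    (htcc : ‖F u - F udag - F' (u - udag)‖ ≤ ν * ‖F u - F udag‖)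
    (hdisc : τ * δ ≤ ‖F u - yδ‖) :
    (1 - ν - (1 + ν) / τ) * ‖F u - yδ‖ ^ 2 ≤ ⟪F u - yδ, F' (u - udag)⟫ := by
  set s := F u - yδ
  have hlin : F' (u - udag) = s + (yδ - F udag) - (F u - F udag - F' (u - udag)) := by
    simp only [s]; abel
  have hFF : ‖F u - F udag‖ ≤ ‖s‖ + δ := by
    have hsum : F u - F udag = s + (yδ - F udag) := by simp only [s]; abel
    rw [hsum]
    exact (norm_add_le _ _).trans (by linarith)
  have hr := htcc.trans (mul_le_mul_of_nonneg_left hFF hν)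
  have hinner := real_inner_add_sub_ge s _ _ hnoise hr
  rw [← hlin] at hinner
  have hδs : δ * ‖s‖ ≤ ‖s‖ ^ 2 / τ := by
    rw [le_div_iff₀ hτ]; nlinarith [norm_nonneg s]
  have hexpand : (1 - ν - (1 + ν) / τ) * ‖s‖ ^ 2
      = (1 - ν) * ‖s‖ ^ 2 - (1 + ν) * (‖s‖ ^ 2 / τ) := by
    ring
  linarith [mul_le_mul_of_nonneg_left hδs (by linarith : (0 : ℝ) ≤ 1 + ν)]

variable [CompleteSpace X] [CompleteSpace Y]

theorem norm_adjoint_apply_le (T : X →L[ℝ] Y) (y : Y) :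
    ‖ContinuousLinearMap.adjoint T y‖ ≤ ‖T‖ * ‖y‖ := by
  simpa only [LinearIsometryEquiv.norm_map] using (ContinuousLinearMap.adjoint T).le_opNorm y

theorem sq_norm_sub_adjoint_apply_le (T : X →L[ℝ] Y) (e : X) (s : Y) :
    ‖e - ContinuousLinearMap.adjoint T s‖ ^ 2 ≤ ‖e‖ ^ 2 - 2 * ⟪s, T e⟫ + ‖T‖ ^ 2 * ‖s‖ ^ 2 := by
  rw [norm_sub_sq_real, ContinuousLinearMap.adjoint_inner_right, real_inner_comm]
  have h := norm_adjoint_apply_le T s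
  have h2 := pow_le_pow_left₀ (norm_nonneg _) h 2
  rw [mul_pow] at h2
  linarith

theorem sq_norm_landweber_step_sub_le (F : X → Y) (F' : X →L[ℝ] Y) (u udag : X) (yδ : Y)
    {δ LF ν τ : ℝ} (hν : 0 ≤ ν) (hτ : 0 < τ) (hnoise : ‖yδ - F udag‖ ≤ δ)
    (hLF : ‖F'‖ ≤ LF)
    (htcc : ‖F u - F udag - F' (u - udag)‖ ≤ ν * ‖F u - F udag‖)
    (hdisc : τ * δ ≤ ‖F u - yδ‖) :
    ‖u - ContinuousLinearMap.adjoint F' (F u - yδ) - udag‖ ^ 2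
      ≤ ‖u - udag‖ ^ 2 - 2 * (1 - LF ^ 2 - ν - (1 + ν) / τ) * ‖F u - yδ‖ ^ 2 := by
  rw [sub_right_comm]
  have hstep := sq_norm_sub_adjoint_apply_le F' (u - udag) (F u - yδ)
  have hinner := real_inner_residual_linearization_ge F F' u udag yδ hν hτ hnoise htcc hdisc
  have hLF2 : ‖F'‖ ^ 2 ≤ LF ^ 2 := pow_le_pow_left₀ (norm_nonneg _) hLF 2
  nlinarith [sq_nonneg ‖F u - yδ‖]

end InnerProductSpace

theorem stmt3_general
    {X Y : Type*}
    [NormedAddCommGroup X] [InnerProductSpace ℝ X] [CompleteSpace X]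
    [NormedAddCommGroup Y] [InnerProductSpace ℝ Y] [CompleteSpace Y]
    (F A : X → Y) (udag : X) (y yδ : Y) (δ ρ LF LA ν τ Cτ CA Clam lam : ℝ)
    (hy : y = F udag) (hν : 0 < ν) (hτ : 0 < τ)
    (hlam : 0 ≤ lam)
    (hnoise : ‖yδ - y‖ ≤ δ)
    (uk : X) (huk : uk ∈ Metric.closedBall udag ρ)
    (F' A' : X →L[ℝ] Y)
    (hLF : ‖F'‖ ≤ LF) (hLA : ‖A'‖ ≤ LA)
    (htcc : ‖F uk - F udag - F' (uk - udag)‖ ≤ ν * ‖F uk - F udag‖)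
    (hAres : ‖A uk - yδ‖ ≤ CA)
    (hdisc : τ * δ ≤ ‖F uk - yδ‖)
    (hCτ : Cτ = 1 - LF ^ 2 - ν - (1 + ν) / τ) (hCτ0 : 0 ≤ Cτ)
    (hlam1 : lam * LA * CA ≤ ρ)
    (hlam2 : lam ≤ Clam * ‖F uk - yδ‖ ^ 2) :
    ‖(uk - ContinuousLinearMap.adjoint F' (F uk - yδ)
          - lam • ContinuousLinearMap.adjoint A' (A uk - yδ)) - udag‖ ^ 2
        - ‖uk - udag‖ ^ 2
      ≤ -2 * (Cτ - 2 * LA * CA * Clam * ρ) * ‖F uk - yδ‖ ^ 2 := by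
  subst hy
  set s := F uk - yδ
  set w := uk - ContinuousLinearMap.adjoint F' s - udag
  set v := lam • ContinuousLinearMap.adjoint A' (A uk - yδ)
  have he : ‖uk - udag‖ ≤ ρ := by rwa [← dist_eq_norm]
  have hw2 : ‖w‖ ^ 2 ≤ ‖uk - udag‖ ^ 2 - 2 * Cτ * ‖s‖ ^ 2 := by
    rw [hCτ]
    exact sq_norm_landweber_step_sub_le F F' uk udag yδ hν.le hτ hnoise hLF htcc hdisc
  have hw : ‖w‖ ≤ ρ :=
    abs_le_of_sq_le_sq' (by nlinarith [sq_nonneg ‖s‖, norm_nonneg (uk - udag)])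
      ((norm_nonneg _).trans he) |>.2
  have hv : ‖v‖ ≤ lam * LA * CA := by
    rw [norm_smul, Real.norm_of_nonneg hlam, mul_assoc]
    exact mul_le_mul_of_nonneg_left ((norm_adjoint_apply_le A' _).trans
      (mul_le_mul hLA hAres (norm_nonneg _) ((norm_nonneg _).trans hLA))) hlam
  have hstep := sq_norm_sub_le_of_norm_le hw (hv.trans hlam1)
  rw [sub_right_comm] at hstep
  have hLACAρ : 0 ≤ LA * CA * ρ := by
    have := (norm_nonneg _).trans hLA
    have := (norm_nonneg _).trans hAres
    have := (norm_nonneg _).trans he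
    positivity
  have hClams : 0 ≤ Clam * ‖s‖ ^ 2 := hlam.trans hlam2
  have hρv : ρ * ‖v‖ ≤ Clam * ‖s‖ ^ 2 * (LA * CA * ρ) :=
    calc ρ * ‖v‖ ≤ ρ * (lam * LA * CA) :=
          mul_le_mul_of_nonneg_left hv ((norm_nonneg _).trans he)
      _ = lam * (LA * CA * ρ) := by ring
      _ ≤ Clam * ‖s‖ ^ 2 * (LA * CA * ρ) := mul_le_mul_of_nonneg_right hlam2 hLACAρ
  nlinarith [mul_nonneg hClams hLACAρ]

/-- One-step descent inequality (Proposition 2.3, main estimate): under the tangential cone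
condition, the derivative bounds, the discrepancy condition and the conditions on `λ_k`, the
iteratively regularized Landweber step
`u_{k+1} = u_k − F'(u_k)*(F(u_k) − yδ) − λ_k·Â'(u_k)*(Â(u_k) − yδ)` satisfies
`‖u_{k+1} − u†‖² − ‖u_k − u†‖² ≤ −2(C_τ − 2·L_Â·C_Â^δ·C_λ^δ·ρ)·‖F(u_k) − yδ‖²`. -/
theorem stmt3
    {X Y : Type*}
    [NormedAddCommGroup X] [InnerProductSpace ℝ X] [CompleteSpace X]
    [NormedAddCommGroup Y] [InnerProductSpace ℝ Y] [CompleteSpace Y]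
    (F A : X → Y) (udag : X) (y yδ : Y) (δ ρ LF LA ν τ Cτ CA Clam lam : ℝ)
    (hy : y = F udag) (hρ : 0 < ρ) (hν : 0 < ν) (hτ : 0 < τ)
    (hCA : 0 < CA) (hClam : 0 < Clam) (hlam : 0 ≤ lam)
    (hnoise : ‖yδ - y‖ ≤ δ)
    (uk : X) (huk : uk ∈ Metric.closedBall udag ρ)
    (F' A' : X →L[ℝ] Y)
    (hdF : HasFDerivAt F F' uk) (hdA : HasFDerivAt A A' uk)
    (hLF : ‖F'‖ ≤ LF) (hLA : ‖A'‖ ≤ LA)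
    (htcc : ‖F uk - F udag - F' (uk - udag)‖ ≤ ν * ‖F uk - F udag‖)
    (hAres : ‖A uk - yδ‖ ≤ CA)
    (hdisc : τ * δ ≤ ‖F uk - yδ‖)
    (hCτ : Cτ = 1 - LF ^ 2 - ν - (1 + ν) / τ) (hCτ0 : 0 ≤ Cτ)
    (hlam1 : lam * LA * CA ≤ ρ)
    (hlam2 : lam ≤ Clam * ‖F uk - yδ‖ ^ 2) :
    ‖(uk - ContinuousLinearMap.adjoint F' (F uk - yδ)
          - lam • ContinuousLinearMap.adjoint A' (A uk - yδ)) - udag‖ ^ 2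
        - ‖uk - udag‖ ^ 2
      ≤ -2 * (Cτ - 2 * LA * CA * Clam * ρ) * ‖F uk - yδ‖ ^ 2 :=
  stmt3_general F A udag y yδ δ ρ LF LA ν τ Cτ CA Clam lam hy hν hτ hlam hnoise uk huk F' A' hLF hLA
    htcc hAres hdisc hCτ hCτ0 hlam1 hlam2
end

section
/- Under the hypotheses of the one-step descent inequality (u_k ∈ B_ρ(u†); tangential cone condition with constant ν at u_k; ‖F'(u_k)‖ ≤ L_F; ‖Â'(u_k)‖ ≤ L_Â; ‖Â(u_k) − y^δ‖ ≤ C_Â^δ; ‖F(u_k) − y^δ‖ ≥ τδ with C_τ = 1 − L_F² − ν − (1+ν)/τ ≥ 0; λ_k·L_Â·C_Â^δ ≤ ρ and λ_k ≤ C_λ^δ·‖F(u_k) − y^δ‖²), and assuming additionally C_τ − 2·L_Â·C_Â^δ·C_λ^δ·ρ > 0, the next iterate u_{k+1} = u_k − F'(u_k)*(F(u_k) − y^δ) − λ_k·Â'(u_k)*(Â(u_k) − y^δ) satisfies ‖u_{k+1} − u†‖ ≤ ‖u_k − u†‖ and u_{k+1} ∈ B_ρ(u†). -/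
/-!
The Landweber half-step `v = u_k − F'(u_k)*(F(u_k) − y^δ)` is a descent step: the tangential cone
condition and the discrepancy bound `τδ ≤ ‖F(u_k) − y^δ‖` make `F'(u_k)*(F(u_k) − y^δ)` correlate
with `u_k − u†`, which gives `‖v − u†‖² ≤ ‖u_k − u†‖² − 2 C_τ ‖F(u_k) − y^δ‖²`. The regularizing term
`λ_k Â'(u_k)*(Â(u_k) − y^δ)` perturbs the squared error by at most `3 λ_k L_Â C_Â^δ ρ`, and the step
size rule `λ_k ≤ C_λ^δ ‖F(u_k) − y^δ‖²` turns this into a multiple of `‖F(u_k) − y^δ‖²` that the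
descent term absorbs as soon as `C_τ > 2 L_Â C_Â^δ C_λ^δ ρ`.
-/

open scoped RealInnerProductSpace
open ContinuousLinearMap

section

variable {X Y : Type*}
  [NormedAddCommGroup X] [InnerProductSpace ℝ X] [NormedAddCommGroup Y] [InnerProductSpace ℝ Y]

theorem norm_sub_smul_sq_le {v w : X} {ρ M lam : ℝ} (hv : ‖v‖ ≤ ρ) (hw : ‖w‖ ≤ M)
    (hlam : 0 ≤ lam) (hlamM : lam * M ≤ ρ) :
    ‖v - lam • w‖ ^ 2 ≤ ‖v‖ ^ 2 + 3 * lam * M * ρ := by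
  have hlamw : lam * ‖w‖ ≤ lam * M := mul_le_mul_of_nonneg_left hw hlam
  have hlamM0 : 0 ≤ lam * M := (mul_nonneg hlam (norm_nonneg w)).trans hlamw
  have hcross : -⟪v, lam • w⟫ ≤ lam * M * ρ := by
    have hvw : -⟪v, w⟫ ≤ ρ * M :=
      (neg_le_abs _).trans ((abs_real_inner_le_norm v w).trans
        (mul_le_mul hv hw (norm_nonneg w) ((norm_nonneg v).trans hv)))
    rw [real_inner_smul_right]
    nlinarith [mul_le_mul_of_nonneg_left hvw hlam]
  have hsmul : ‖lam • w‖ ^ 2 ≤ lam * M * ρ :=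
    calc ‖lam • w‖ ^ 2 = (lam * ‖w‖) ^ 2 := by rw [norm_smul, Real.norm_of_nonneg hlam]
      _ ≤ (lam * M) * (lam * M) := by
          rw [sq]; exact mul_self_le_mul_self (mul_nonneg hlam (norm_nonneg w)) hlamw
      _ ≤ lam * M * ρ := mul_le_mul_of_nonneg_left hlamM hlamM0
  rw [norm_sub_sq_real]
  linarith

theorem inner_residual_ge_of_tangentialCone {E : Type*} [NormedAddCommGroup E] [NormedSpace ℝ E]
    (F : E → Y) (F' : E →L[ℝ] Y) {u udag : E} {yδ : Y} {δ ν τ : ℝ} (hν : 0 ≤ ν) (hτ : 0 < τ)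
    (hnoise : ‖yδ - F udag‖ ≤ δ) (hdisc : τ * δ ≤ ‖F u - yδ‖)
    (htcc : ‖F u - F udag - F' (u - udag)‖ ≤ ν * ‖F u - F udag‖) :
    (1 - ν - (1 + ν) / τ) * ‖F u - yδ‖ ^ 2 ≤ ⟪F u - yδ, F' (u - udag)⟫ := by
  set r := F u - yδ
  set n := yδ - F udag
  set w := F u - F udag - F' (u - udag)
  have hsplit : F' (u - udag) = r + n - w := by simp only [r, n, w]; abel
  have hlin : ‖F u - F udag‖ ≤ ‖r‖ + δ :=
    calc ‖F u - F udag‖ = ‖r + n‖ := by simp only [r, n]; abel_nf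
      _ ≤ ‖r‖ + δ := (norm_add_le r n).trans (by linarith)
  have hrn : -(‖r‖ * δ) ≤ ⟪r, n⟫ :=
    neg_le.mp ((neg_le_abs _).trans
      ((abs_real_inner_le_norm r n).trans (mul_le_mul_of_nonneg_left hnoise (norm_nonneg r))))
  have hrw : ⟪r, w⟫ ≤ ‖r‖ * (ν * (‖r‖ + δ)) :=
    (real_inner_le_norm r w).trans (mul_le_mul_of_nonneg_left
      (htcc.trans (mul_le_mul_of_nonneg_left hlin hν)) (norm_nonneg r))
  have hδ : (1 + ν) * (δ * ‖r‖) ≤ (1 + ν) / τ * ‖r‖ ^ 2 := by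
    rw [div_mul_eq_mul_div, le_div_iff₀ hτ, sq]
    nlinarith [mul_le_mul_of_nonneg_right hdisc (norm_nonneg r)]
  rw [hsplit, inner_sub_right, inner_add_right, real_inner_self_eq_norm_sq]
  nlinarith

variable [CompleteSpace X] [CompleteSpace Y]

theorem norm_adjoint_apply_le_s4 {T : X →L[ℝ] Y} {L C : ℝ} (hT : ‖T‖ ≤ L) {r : Y} (hr : ‖r‖ ≤ C) :
    ‖adjoint T r‖ ≤ L * C :=
  calc ‖adjoint T r‖ ≤ ‖T‖ * ‖r‖ := by
        simpa only [LinearIsometryEquiv.norm_map] using (adjoint T).le_opNorm r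
    _ ≤ L * C := mul_le_mul hT hr (norm_nonneg r) ((norm_nonneg T).trans hT)

theorem norm_sub_adjoint_apply_sq_le {T : X →L[ℝ] Y} {L : ℝ} (hT : ‖T‖ ≤ L) (e : X) (r : Y) :
    ‖e - adjoint T r‖ ^ 2 ≤ ‖e‖ ^ 2 - 2 * ⟪r, T e⟫ + L ^ 2 * ‖r‖ ^ 2 := by
  have hnorm : ‖adjoint T r‖ ^ 2 ≤ (L * ‖r‖) ^ 2 :=
    pow_le_pow_left₀ (norm_nonneg _) (norm_adjoint_apply_le_s4 hT le_rfl) 2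
  rw [norm_sub_sq_real, real_inner_comm, adjoint_inner_left]
  linarith [mul_pow L ‖r‖ 2]

theorem norm_landweberStep_sub_sq_le (F : X → Y) (F' : X →L[ℝ] Y) {u udag : X} {yδ : Y}
    {δ ν τ L : ℝ} (hL : ‖F'‖ ≤ L) (hν : 0 ≤ ν) (hτ : 0 < τ)
    (hnoise : ‖yδ - F udag‖ ≤ δ) (hdisc : τ * δ ≤ ‖F u - yδ‖)
    (htcc : ‖F u - F udag - F' (u - udag)‖ ≤ ν * ‖F u - F udag‖) :
    ‖u - adjoint F' (F u - yδ) - udag‖ ^ 2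
      ≤ ‖u - udag‖ ^ 2 - 2 * (1 - L ^ 2 - ν - (1 + ν) / τ) * ‖F u - yδ‖ ^ 2 := by
  have hinner := inner_residual_ge_of_tangentialCone F F' hν hτ hnoise hdisc htcc
  have hstep := norm_sub_adjoint_apply_sq_le hL (u - udag) (F u - yδ)
  rw [sub_right_comm]
  nlinarith [mul_nonneg (sq_nonneg L) (sq_nonneg ‖F u - yδ‖)]

end

theorem stmt4_general
    {X Y : Type*}
    [NormedAddCommGroup X] [InnerProductSpace ℝ X] [CompleteSpace X]
    [NormedAddCommGroup Y] [InnerProductSpace ℝ Y] [CompleteSpace Y]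
    (F A : X → Y) (udag : X) (y yδ : Y) (δ ρ LF LA ν τ Cτ CA Clam lam : ℝ)
    (hy : y = F udag) (hν : 0 < ν) (hτ : 0 < τ)
    (hlam : 0 ≤ lam)
    (hnoise : ‖yδ - y‖ ≤ δ)
    (uk : X) (huk : uk ∈ Metric.closedBall udag ρ)
    (F' A' : X →L[ℝ] Y)
    (hLF : ‖F'‖ ≤ LF) (hLA : ‖A'‖ ≤ LA)
    (htcc : ‖F uk - F udag - F' (uk - udag)‖ ≤ ν * ‖F uk - F udag‖)
    (hAres : ‖A uk - yδ‖ ≤ CA)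
    (hdisc : τ * δ ≤ ‖F uk - yδ‖)
    (hCτ : Cτ = 1 - LF ^ 2 - ν - (1 + ν) / τ) (hCτ0 : 0 ≤ Cτ)
    (hlam1 : lam * LA * CA ≤ ρ)
    (hlam2 : lam ≤ Clam * ‖F uk - yδ‖ ^ 2)
    (hpos : 0 < Cτ - 2 * LA * CA * Clam * ρ) :
    ‖(uk - ContinuousLinearMap.adjoint F' (F uk - yδ)
          - lam • ContinuousLinearMap.adjoint A' (A uk - yδ)) - udag‖
        ≤ ‖uk - udag‖ ∧
      (uk - ContinuousLinearMap.adjoint F' (F uk - yδ)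
          - lam • ContinuousLinearMap.adjoint A' (A uk - yδ)) ∈ Metric.closedBall udag ρ := by
  set r := F uk - yδ
  set v := uk - adjoint F' r - udag
  have he : ‖uk - udag‖ ≤ ρ := by rwa [Metric.mem_closedBall, dist_eq_norm] at huk
  have hv2 : ‖v‖ ^ 2 ≤ ‖uk - udag‖ ^ 2 - 2 * Cτ * ‖r‖ ^ 2 := by
    subst hy hCτ
    exact norm_landweberStep_sub_sq_le F F' hLF hν.le hτ hnoise hdisc htcc
  have hvρ : ‖v‖ ≤ ρ :=
    (sq_le_sq₀ (norm_nonneg v) (norm_nonneg _)).mp (by nlinarith [sq_nonneg ‖r‖]) |>.trans he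
  have hAs := norm_adjoint_apply_le_s4 hLA hAres
  have hperturb := norm_sub_smul_sq_le hvρ hAs hlam (by rwa [← mul_assoc])
  have hMρ : 0 ≤ LA * CA * ρ := mul_nonneg ((norm_nonneg _).trans hAs) ((norm_nonneg v).trans hvρ)
  have hstep : lam * (LA * CA) * ρ ≤ Clam * ‖r‖ ^ 2 * (LA * CA) * ρ := by
    rw [mul_assoc, mul_assoc _ (LA * CA)]; exact mul_le_mul_of_nonneg_right hlam2 hMρ
  -- `2 C_τ − 3 K = (3/2)(C_τ − 2 K) + C_τ / 2` with `K = L_Â C_Â C_λ ρ`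
  have hdecay : 0 ≤ (2 * Cτ - 3 * (LA * CA * Clam * ρ)) * ‖r‖ ^ 2 :=
    mul_nonneg (by linarith) (sq_nonneg _)
  have hsq : ‖v - lam • adjoint A' (A uk - yδ)‖ ^ 2 ≤ ‖uk - udag‖ ^ 2 := by nlinarith
  have hnorm := (sq_le_sq₀ (norm_nonneg _) (norm_nonneg _)).mp hsq
  rw [Metric.mem_closedBall, dist_eq_norm, sub_right_comm]
  exact ⟨hnorm, hnorm.trans he⟩

/-- Proposition 2.3 (monotonicity): under the hypotheses of the one-step descent inequality and
assuming additionally `C_τ − 2·L_Â·C_Â^δ·C_λ^δ·ρ > 0`, the next iterate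
`u_{k+1} = u_k − F'(u_k)*(F(u_k) − yδ) − λ_k·Â'(u_k)*(Â(u_k) − yδ)` satisfies
`‖u_{k+1} − u†‖ ≤ ‖u_k − u†‖` and `u_{k+1} ∈ B_ρ(u†)`. -/
theorem stmt4
    {X Y : Type*}
    [NormedAddCommGroup X] [InnerProductSpace ℝ X] [CompleteSpace X]
    [NormedAddCommGroup Y] [InnerProductSpace ℝ Y] [CompleteSpace Y]
    (F A : X → Y) (udag : X) (y yδ : Y) (δ ρ LF LA ν τ Cτ CA Clam lam : ℝ)
    (hy : y = F udag) (hρ : 0 < ρ) (hν : 0 < ν) (hτ : 0 < τ)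
    (hCA : 0 < CA) (hClam : 0 < Clam) (hlam : 0 ≤ lam)
    (hnoise : ‖yδ - y‖ ≤ δ)
    (uk : X) (huk : uk ∈ Metric.closedBall udag ρ)
    (F' A' : X →L[ℝ] Y)
    (hdF : HasFDerivAt F F' uk) (hdA : HasFDerivAt A A' uk)
    (hLF : ‖F'‖ ≤ LF) (hLA : ‖A'‖ ≤ LA)
    (htcc : ‖F uk - F udag - F' (uk - udag)‖ ≤ ν * ‖F uk - F udag‖)
    (hAres : ‖A uk - yδ‖ ≤ CA)
    (hdisc : τ * δ ≤ ‖F uk - yδ‖)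
    (hCτ : Cτ = 1 - LF ^ 2 - ν - (1 + ν) / τ) (hCτ0 : 0 ≤ Cτ)
    (hlam1 : lam * LA * CA ≤ ρ)
    (hlam2 : lam ≤ Clam * ‖F uk - yδ‖ ^ 2)
    (hpos : 0 < Cτ - 2 * LA * CA * Clam * ρ) :
    ‖(uk - ContinuousLinearMap.adjoint F' (F uk - yδ)
          - lam • ContinuousLinearMap.adjoint A' (A uk - yδ)) - udag‖
        ≤ ‖uk - udag‖ ∧
      (uk - ContinuousLinearMap.adjoint F' (F uk - yδ)
          - lam • ContinuousLinearMap.adjoint A' (A uk - yδ)) ∈ Metric.closedBall udag ρ :=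
  stmt4_general F A udag y yδ δ ρ LF LA ν τ Cτ CA Clam lam hy hν hτ hlam hnoise uk huk F' A' hLF hLA
    htcc hAres hdisc hCτ hCτ0 hlam1 hlam2 hpos
end

section
/- Let X and Y be real Hilbert spaces, u† ∈ X with y = F(u†), and let (u_i) be elements of B_ρ(u†) such that F is Fréchet differentiable at each u_i and the two-point tangential cone condition ‖F(u) − F(v) − F'(u)(u − v)‖ ≤ ν‖F(u) − F(v)‖ holds with constant ν > 0 for all u, v ∈ B_ρ(u†). Let h ≤ j be indices such that ‖F(u_h) − y‖ ≤ ‖F(u_i) − y‖ for all h ≤ i ≤ j. Then Σ_{i=h}^{j−1} |⟨y − F(u_i), F'(u_i)(u_h − u†)⟩| ≤ (1 + 3ν)·Σ_{i=h}^{j−1} ‖y − F(u_i)‖². -/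
open scoped RealInnerProductSpace

/-!
Termwise: `F'(u_i)(u_h - u†)` equals `F(u_h) - y` corrected by the difference of the two
tangential-cone residuals of `F` at `u_i` (towards `u†` and towards `u_h`). Both residuals are
at most `ν` times `‖F(u_i) - F(u†)‖` resp. `‖F(u_i) - F(u_h)‖ ≤ 2‖F(u_i) - y‖`, and
`‖F(u_h) - y‖ ≤ ‖F(u_i) - y‖` by minimality, so Cauchy–Schwarz gives the bound for each `i`.
-/

section TangentialCone

variable {X Y : Type*} [NormedAddCommGroup X] [NormedSpace ℝ X]
  [NormedAddCommGroup Y] [NormedSpace ℝ Y] {F : X → Y} {A : X →L[ℝ] Y} {ν : ℝ} {u v w : X}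

theorem norm_apply_sub_le_of_tangential_cone
    (hv : ‖F u - F v - A (u - v)‖ ≤ ν * ‖F u - F v‖)
    (hw : ‖F u - F w - A (u - w)‖ ≤ ν * ‖F u - F w‖) :
    ‖A (w - v)‖ ≤ ‖F w - F v‖ + ν * ‖F u - F v‖ + ν * ‖F u - F w‖ := by
  have hsplit : A (w - v) = (F w - F v) - (F u - F v - A (u - v)) + (F u - F w - A (u - w)) := by
    rw [show w - v = (u - v) - (u - w) by abel, map_sub]
    abel
  calc ‖A (w - v)‖
      ≤ ‖F w - F v‖ + ‖F u - F v - A (u - v)‖ + ‖F u - F w - A (u - w)‖ := by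
        rw [hsplit]
        exact (norm_add_le _ _).trans (add_le_add_left (norm_sub_le _ _) _)
    _ ≤ ‖F w - F v‖ + ν * ‖F u - F v‖ + ν * ‖F u - F w‖ := by gcongr

theorem norm_apply_sub_le_of_tangential_cone_of_norm_le (hν : 0 ≤ ν)
    (hv : ‖F u - F v - A (u - v)‖ ≤ ν * ‖F u - F v‖)
    (hw : ‖F u - F w - A (u - w)‖ ≤ ν * ‖F u - F w‖)
    (hwu : ‖F w - F v‖ ≤ ‖F u - F v‖) :
    ‖A (w - v)‖ ≤ (1 + 3 * ν) * ‖F u - F v‖ := by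
  have huw : ‖F u - F w‖ ≤ 2 * ‖F u - F v‖ := by
    calc ‖F u - F w‖ = ‖(F u - F v) - (F w - F v)‖ := by rw [sub_sub_sub_cancel_right]
      _ ≤ ‖F u - F v‖ + ‖F w - F v‖ := norm_sub_le _ _
      _ ≤ 2 * ‖F u - F v‖ := by linarith
  calc ‖A (w - v)‖ ≤ ‖F w - F v‖ + ν * ‖F u - F v‖ + ν * ‖F u - F w‖ :=
        norm_apply_sub_le_of_tangential_cone hv hw
    _ ≤ ‖F u - F v‖ + ν * ‖F u - F v‖ + ν * (2 * ‖F u - F v‖) := by gcongr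
    _ = (1 + 3 * ν) * ‖F u - F v‖ := by ring

end TangentialCone

theorem stmt7_general
    {X Y : Type*}
    [NormedAddCommGroup X] [InnerProductSpace ℝ X]
    [NormedAddCommGroup Y] [InnerProductSpace ℝ Y]
    (F : X → Y) (udag : X) (y : Y) (ρ ν : ℝ)
    (u : ℕ → X) (F' : X → X →L[ℝ] Y)
    (hy : y = F udag) (hρ : 0 < ρ) (hν : 0 < ν)
    (hball : ∀ i, u i ∈ Metric.closedBall udag ρ)
    (htcc : ∀ v ∈ Metric.closedBall udag ρ, ∀ w ∈ Metric.closedBall udag ρ,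
      ‖F v - F w - (F' v) (v - w)‖ ≤ ν * ‖F v - F w‖)
    (h j : ℕ)
    (hmin : ∀ i, h ≤ i → i ≤ j → ‖F (u h) - y‖ ≤ ‖F (u i) - y‖) :
    ∑ i ∈ Finset.Ico h j, |⟪y - F (u i), (F' (u i)) (u h - udag)⟫|
      ≤ (1 + 3 * ν) * ∑ i ∈ Finset.Ico h j, ‖y - F (u i)‖ ^ 2 := by
  subst hy
  rw [Finset.mul_sum]
  refine Finset.sum_le_sum fun i hi => ?_
  obtain ⟨hhi, hij⟩ := Finset.mem_Ico.1 hi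
  have hdag : udag ∈ Metric.closedBall udag ρ := Metric.mem_closedBall_self hρ.le
  have hbound : ‖F' (u i) (u h - udag)‖ ≤ (1 + 3 * ν) * ‖F (u i) - F udag‖ :=
    norm_apply_sub_le_of_tangential_cone_of_norm_le hν.le (htcc _ (hball i) _ hdag)
      (htcc _ (hball i) _ (hball h)) (hmin i hhi hij.le)
  calc |⟪F udag - F (u i), F' (u i) (u h - udag)⟫|
      ≤ ‖F udag - F (u i)‖ * ‖F' (u i) (u h - udag)‖ := abs_real_inner_le_norm _ _
    _ ≤ ‖F udag - F (u i)‖ * ((1 + 3 * ν) * ‖F (u i) - F udag‖) := by gcongr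
    _ = (1 + 3 * ν) * ‖F udag - F (u i)‖ ^ 2 := by rw [norm_sub_rev (F (u i))]; ring

/-- Estimate of the term `S_F` in the Cauchy-sequence argument (Theorem 2.6): under the
two-point tangential cone condition on `B_ρ(u†)`, if `h ≤ j` and
`‖F(u_h) − y‖ ≤ ‖F(u_i) − y‖` for all `h ≤ i ≤ j`, then
`Σ_{i=h}^{j−1} |⟨y − F(u_i), F'(u_i)(u_h − u†)⟩| ≤ (1 + 3ν)·Σ_{i=h}^{j−1} ‖y − F(u_i)‖²`. -/
theorem stmt7
    {X Y : Type*}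
    [NormedAddCommGroup X] [InnerProductSpace ℝ X] [CompleteSpace X]
    [NormedAddCommGroup Y] [InnerProductSpace ℝ Y] [CompleteSpace Y]
    (F : X → Y) (udag : X) (y : Y) (ρ ν : ℝ)
    (u : ℕ → X) (F' : X → X →L[ℝ] Y)
    (hy : y = F udag) (hρ : 0 < ρ) (hν : 0 < ν)
    (hball : ∀ i, u i ∈ Metric.closedBall udag ρ)
    (hdF : ∀ i, HasFDerivAt F (F' (u i)) (u i))
    (htcc : ∀ v ∈ Metric.closedBall udag ρ, ∀ w ∈ Metric.closedBall udag ρ,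
      ‖F v - F w - (F' v) (v - w)‖ ≤ ν * ‖F v - F w‖)
    (h j : ℕ) (hhj : h ≤ j)
    (hmin : ∀ i, h ≤ i → i ≤ j → ‖F (u h) - y‖ ≤ ‖F (u i) - y‖) :
    ∑ i ∈ Finset.Ico h j, |⟪y - F (u i), (F' (u i)) (u h - udag)⟫|
      ≤ (1 + 3 * ν) * ∑ i ∈ Finset.Ico h j, ‖y - F (u i)‖ ^ 2 :=
  stmt7_general F udag y ρ ν u F' hy hρ hν hball htcc h j hmin
end

section
/- Let X and Y be real Hilbert spaces, u† ∈ X, y = F(u†), and let the noise-free iterates (u_k) of u_{k+1} = u_k − F'(u_k)*(F(u_k) − y) − λ_k·Â'(u_k)*(Â(u_k) − y) converge strongly to u†. Let δ_n > 0 with δ_n → 0, let y_n ∈ Y with ‖y_n − y‖ ≤ δ_n, and let (u_k^n)_k denote the iterates of the iteration with data y_n and parameters λ_k^n. Suppose: (a) for each n, the monotonicity property ‖u_{k+1}^n − u†‖ ≤ ‖u_k^n − u†‖ holds for all k < k_n, where k_n is the stopping index of the discrepancy principle ‖F(u_{k_n}^n) − y_n‖ ≤ τδ_n < ‖F(u_k^n)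 − y_n‖ for k < k_n; (b) for each fixed k, u_k^n → u_k strongly as n → ∞; (c) F is continuous; (d) k_n → ∞ as n → ∞. Then u_{k_n}^n → u† strongly as n → ∞. -/
open Filter Topology

/-
Fix `ε > 0`. Since `u_k → u†`, some `u_K` lies in the open ball of radius `ε` about `u†`, and by
stability so does `u_K^n` for all large `n`. For large `n` also `K ≤ k_n`, and monotonicity of the
error up to the stopping index gives `‖u_{k_n}^n − u†‖ ≤ ‖u_K^n − u†‖ < ε`.
-/

section

variable {α : Type*} [PseudoMetricSpace α]

theorem dist_le_dist_of_dist_succ_le {v : ℕ → α} {a : α} {N : ℕ}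
    (hv : ∀ k < N, dist (v (k + 1)) a ≤ dist (v k) a) {K : ℕ} (hK : K ≤ N) :
    dist (v N) a ≤ dist (v K) a := by
  have hanti : AntitoneOn (fun k => dist (v k) a) (Set.Iic N) :=
    antitoneOn_of_succ_le Set.ordConnected_Iic fun k _ _ hk => by
      rw [Order.succ_eq_add_one] at hk ⊢
      exact hv k hk
  exact hanti hK (Set.mem_Iic.2 le_rfl) hK

theorem tendsto_diag_of_dist_antitone {u : ℕ → α} {un : ℕ → ℕ → α} {kn : ℕ → ℕ} {a : α}
    (hu : Tendsto u atTop (𝓝 a)) (hun : ∀ k, Tendsto (fun n => un n k) atTop (𝓝 (u k)))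
    (hmono : ∀ n, ∀ k < kn n, dist (un n (k + 1)) a ≤ dist (un n k) a)
    (hkn : Tendsto kn atTop atTop) :
    Tendsto (fun n => un n (kn n)) atTop (𝓝 a) := by
  refine Metric.tendsto_nhds.2 fun ε hε => ?_
  obtain ⟨K, hK⟩ : ∃ K, u K ∈ Metric.ball a ε :=
    (hu.eventually (Metric.ball_mem_nhds a hε)).exists
  filter_upwards [(hun K).eventually (Metric.isOpen_ball.mem_nhds hK),
    hkn.eventually_ge_atTop K] with n hnK hKn
  exact (dist_le_dist_of_dist_succ_le (hmono n) hKn).trans_lt hnK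

end

theorem stmt10_general
    {X : Type*}
    [NormedAddCommGroup X]
    (udag : X)
    (u : ℕ → X)
    (un : ℕ → ℕ → X) (kn : ℕ → ℕ)
    (hconv : Filter.Tendsto u Filter.atTop (nhds udag))
    (hmono : ∀ n, ∀ k < kn n, ‖un n (k + 1) - udag‖ ≤ ‖un n k - udag‖)
    (hstab : ∀ k, Filter.Tendsto (fun n => un n k) Filter.atTop (nhds (u k)))
    (hkn : Filter.Tendsto kn Filter.atTop Filter.atTop) :
    Filter.Tendsto (fun n => un n (kn n)) Filter.atTop (nhds udag) := by
  refine tendsto_diag_of_dist_antitone hconv hstab (fun n k hk => ?_) hkn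
  simpa only [dist_eq_norm] using hmono n k hk

/-- Theorem 2.7, case (ii) (stability): if the noise-free iterates converge strongly to `u†`,
the noisy iterates are monotone up to the stopping index `k_n` of the discrepancy principle,
for each fixed `k` the noisy iterates converge to the noise-free ones as `n → ∞`, `F` is
continuous and `k_n → ∞`, then `u_{k_n}^{δ_n} → u†` as `n → ∞`. -/
theorem stmt10
    {X Y : Type*}
    [NormedAddCommGroup X] [InnerProductSpace ℝ X] [CompleteSpace X]
    [NormedAddCommGroup Y] [InnerProductSpace ℝ Y] [CompleteSpace Y]
    (F A : X → Y) (udag : X) (y : Y) (τ : ℝ)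
    (F' A' : X → X →L[ℝ] Y)
    (u : ℕ → X) (lam : ℕ → ℝ)
    (δn : ℕ → ℝ) (yn : ℕ → Y) (un : ℕ → ℕ → X) (lamn : ℕ → ℕ → ℝ) (kn : ℕ → ℕ)
    (hy : y = F udag) (hτ : 0 < τ)
    (hiter : ∀ k : ℕ,
      u (k + 1) = u k - ContinuousLinearMap.adjoint (F' (u k)) (F (u k) - y)
        - lam k • ContinuousLinearMap.adjoint (A' (u k)) (A (u k) - y))
    (hconv : Filter.Tendsto u Filter.atTop (nhds udag))
    (hδpos : ∀ n, 0 < δn n)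
    (hδ0 : Filter.Tendsto δn Filter.atTop (nhds 0))
    (hynoise : ∀ n, ‖yn n - y‖ ≤ δn n)
    (hitern : ∀ n k,
      un n (k + 1) = un n k
        - ContinuousLinearMap.adjoint (F' (un n k)) (F (un n k) - yn n)
        - lamn n k • ContinuousLinearMap.adjoint (A' (un n k)) (A (un n k) - yn n))
    (hmono : ∀ n, ∀ k < kn n, ‖un n (k + 1) - udag‖ ≤ ‖un n k - udag‖)
    (hstop : ∀ n, ‖F (un n (kn n)) - yn n‖ ≤ τ * δn n)
    (hbefore : ∀ n, ∀ k < kn n, τ * δn n < ‖F (un n k) - yn n‖)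
    (hstab : ∀ k, Filter.Tendsto (fun n => un n k) Filter.atTop (nhds (u k)))
    (hFcont : Continuous F)
    (hkn : Filter.Tendsto kn Filter.atTop Filter.atTop) :
    Filter.Tendsto (fun n => un n (kn n)) Filter.atTop (nhds udag) :=
  stmt10_general udag u un kn hconv hmono hstab hkn
end
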